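/- arXiv:1110.1358 — 4 statements merged into one kernel-verified Lean document; each statement's English description precedes it below -/
import Mathlib

section
/- Let epsilon ∈ (0, 1) and rho > 0, and k a positive integer. Suppose nonnegative weights evolve by w_i^(t) >= w_i^(t-1) + (2 epsilon^2 / (k rho)) * mu^(t-1) and mu^(t) <= (1 + epsilon(1+2 epsilon)/rho) * mu^(t-1), where mu^(t) = sum_i w_i^(t), with w_i^(0) = 1. Then for all t and all i, w_i^(t) >= (epsilon / k) * mu^(t). -/
/-! If every weight is at least a `c`-fraction of the total `μ`, each weight gains `d μ` in a
step while `μ` grows by at most a factor `1 + g`, and `c g ≤ d`, then the additive gain covers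
the growth of `c μ`, so the invariant `w_i ≥ c μ` propagates by induction on `t`. Here
`c = ε / k`, `d = 2 ε² / (k ρ)` and `g = ε (1 + 2 ε) / ρ`, and `c g ≤ d` is `1 + 2 ε ≤ 2`. -/

open Finset

lemma mul_le_of_additive_step {c d g μ μ' x x' : ℝ} (hc : 0 ≤ c) (hμ : 0 ≤ μ) (hcg : c * g ≤ d)
    (hx : c * μ ≤ x) (hx' : x + d * μ ≤ x') (hμ' : μ' ≤ (1 + g) * μ) : c * μ' ≤ x' :=
  calc c * μ' ≤ c * ((1 + g) * μ) := mul_le_mul_of_nonneg_left hμ' hc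
    _ = c * μ + (c * g) * μ := by ring
    _ ≤ x + d * μ := add_le_add hx (mul_le_mul_of_nonneg_right hcg hμ)
    _ ≤ x' := hx'

theorem mul_sum_le_of_additive_growth {ι : Type*} [Fintype ι] (w : ℕ → ι → ℝ) {c d g : ℝ}
    (hc : 0 ≤ c) (hcg : c * g ≤ d) (hnn : ∀ t i, 0 ≤ w t i)
    (h0 : ∀ i, c * ∑ j, w 0 j ≤ w 0 i)
    (hup : ∀ t i, w t i + d * ∑ j, w t j ≤ w (t + 1) i)
    (hμ : ∀ t, ∑ j, w (t + 1) j ≤ (1 + g) * ∑ j, w t j) :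
    ∀ t i, c * ∑ j, w t j ≤ w t i := by
  intro t
  induction t with
  | zero => exact h0
  | succ t ih =>
    exact fun i => mul_le_of_additive_step hc (sum_nonneg fun j _ => hnn t j) hcg (ih i)
      (hup t i) (hμ t)

lemma div_mul_growth_le {k : ℕ} {ε ρ : ℝ} (hε2 : ε < 1 / 2) (hρ : 0 < ρ) :
    ε / k * (ε * (1 + 2 * ε) / ρ) ≤ 2 * ε ^ 2 / (k * ρ) := by
  have hscale : 0 ≤ ε ^ 2 / (k * ρ) := by positivity
  calc ε / k * (ε * (1 + 2 * ε) / ρ) = ε ^ 2 / (k * ρ) * (1 + 2 * ε) := by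
        rw [div_mul_div_comm]; ring
    _ ≤ ε ^ 2 / (k * ρ) * 2 := mul_le_mul_of_nonneg_left (by linarith) hscale
    _ = 2 * ε ^ 2 / (k * ρ) := by ring

theorem stmt_8_general (k : ℕ) (ε ρ : ℝ) (hε : 0 < ε) (hε2 : ε < 1/2) (hρ : 0 < ρ)
    (w : ℕ → Fin k → ℝ) (hnn : ∀ t i, 0 ≤ w t i)
    (h0 : ∀ i, w 0 i = 1)
    (hup : ∀ t : ℕ, ∀ i, w (t + 1) i ≥ w t i + (2 * ε ^ 2 / (k * ρ)) * ∑ j, w t j)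
    (hμ : ∀ t : ℕ, (∑ j, w (t + 1) j) ≤ (1 + ε * (1 + 2 * ε) / ρ) * ∑ j, w t j) :
    ∀ t : ℕ, ∀ i, w t i ≥ (ε / k) * ∑ j, w t j := by
  have hbase : ∀ i, ε / k * ∑ j, w 0 j ≤ w 0 i := by
    intro i
    have hk0 : (k : ℝ) ≠ 0 := by exact_mod_cast i.pos.ne'
    simp only [h0, sum_const, card_univ, Fintype.card_fin, nsmul_eq_mul, mul_one,
      div_mul_cancel₀ _ hk0]
    linarith
  exact mul_sum_le_of_additive_growth w (by positivity) (div_mul_growth_le hε2 hρ) hnn hbase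
    hup hμ

theorem stmt_8 (k : ℕ) (hk : 0 < k) (ε ρ : ℝ) (hε : 0 < ε) (hε2 : ε < 1/2) (hρ : 0 < ρ)
    (w : ℕ → Fin k → ℝ) (hnn : ∀ t i, 0 ≤ w t i)
    (h0 : ∀ i, w 0 i = 1)
    (hup : ∀ t : ℕ, ∀ i, w (t + 1) i ≥ w t i + (2 * ε ^ 2 / (k * ρ)) * ∑ j, w t j)
    (hμ : ∀ t : ℕ, (∑ j, w (t + 1) j) ≤ (1 + ε * (1 + 2 * ε) / ρ) * ∑ j, w t j) :
    ∀ t : ℕ, ∀ i, w t i ≥ (ε / k) * ∑ j, w t j :=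
  stmt_8_general k ε ρ hε hε2 hρ w hnn h0 hup hμ
end

section
/- Let L be a symmetric PSD n×n matrix, s ∈ ℝ^n, x ∈ ℝ^n, and y ∈ ℝ with y^2 > (x - s)^T L (x - s). Then the matrix (y^2 - (x-s)^T L (x-s)) * L + (2 - 4 y^2 / (y^2 + (x-s)^T L (x-s))) * L (x-s) (x-s)^T L is positive semidefinite. -/
/-!
With `v = x - s` and `q = vᵀ L v`, the matrix is `a • L + b • (L v)(L v)ᵀ` with `a = y² - q > 0`.
Cauchy–Schwarz for the seminorm of `L` gives `(zᵀ L v)² ≤ (zᵀ L z) q`, so even when `b < 0` the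
quadratic form at `z` is at least `(a + b q) (zᵀ L z)`, and here `a + b q = (y² - q)² / (y² + q)`.
-/

open Matrix

theorem Matrix.IsHermitian.dotProduct_mulVec_comm {ι R : Type*} [Fintype ι] [CommSemiring R]
    [StarRing R] [TrivialStar R] {L : Matrix ι ι R} (hL : L.IsHermitian) (z v : ι → R) :
    v ⬝ᵥ L *ᵥ z = z ⬝ᵥ L *ᵥ v := by
  have hLt : Lᵀ = L := by rw [← conjTranspose_eq_transpose_of_trivial, hL.eq]
  rw [dotProduct_mulVec, ← mulVec_transpose, hLt, dotProduct_comm]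

namespace Matrix.PosSemidef

variable {ι R : Type*} [Fintype ι] [CommRing R] [LinearOrder R] [IsStrictOrderedRing R]
  [StarRing R] [TrivialStar R] {L : Matrix ι ι R}

theorem dotProduct_mulVec_sq_le (hL : L.PosSemidef) (z v : ι → R) :
    (z ⬝ᵥ L *ᵥ v) ^ 2 ≤ (z ⬝ᵥ L *ᵥ z) * (v ⬝ᵥ L *ᵥ v) := by
  classical
  have h := LinearMap.BilinForm.apply_mul_apply_le_of_forall_zero_le (toLinearMap₂' R L)
    (fun x ↦ by simpa [toLinearMap₂'_apply'] using hL.dotProduct_mulVec_nonneg x) z v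
  simpa only [toLinearMap₂'_apply', hL.1.dotProduct_mulVec_comm z v, ← sq] using h

theorem smul_add_smul_vecMulVec_mulVec [StarOrderedRing R] (hL : L.PosSemidef) (v : ι → R)
    {a b : R} (ha : 0 ≤ a) (hab : 0 ≤ a + b * (v ⬝ᵥ L *ᵥ v)) :
    (a • L + b • vecMulVec (L *ᵥ v) (L *ᵥ v)).PosSemidef := by
  have hu : (vecMulVec (L *ᵥ v) (L *ᵥ v)).IsHermitian := by
    simpa using (posSemidef_vecMulVec_self_star (L *ᵥ v)).1
  refine of_dotProduct_mulVec_nonneg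
    ((hL.1.smul (.all a)).add (hu.smul (.all b))) fun z ↦ ?_
  have hP := hL.dotProduct_mulVec_nonneg z
  have hCS := hL.dotProduct_mulVec_sq_le z v
  simp only [star_trivial] at hP ⊢
  have hform : z ⬝ᵥ (a • L + b • vecMulVec (L *ᵥ v) (L *ᵥ v)) *ᵥ z
      = a * (z ⬝ᵥ L *ᵥ z) + b * (z ⬝ᵥ L *ᵥ v) ^ 2 := by
    simp only [add_mulVec, smul_mulVec, vecMulVec_mulVec, dotProduct_add, dotProduct_smul,
      op_smul_eq_smul, smul_eq_mul, dotProduct_comm (L *ᵥ v) z]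
    ring
  rw [hform]
  rcases le_total 0 b with hb | hb
  · positivity
  · nlinarith [mul_le_mul_of_nonpos_left hCS hb]

end Matrix.PosSemidef

theorem stmt_10 (n : ℕ) (L : Matrix (Fin n) (Fin n) ℝ) (hL : L.PosSemidef)
    (s x : Fin n → ℝ) (y : ℝ)
    (hy : (x - s) ⬝ᵥ L.mulVec (x - s) < y ^ 2) :
    ((y ^ 2 - (x - s) ⬝ᵥ L.mulVec (x - s)) • L +
      (2 - 4 * y ^ 2 / (y ^ 2 + (x - s) ⬝ᵥ L.mulVec (x - s))) •
        vecMulVec (L.mulVec (x - s)) (L.mulVec (x - s))).PosSemidef := by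
  set q := (x - s) ⬝ᵥ L *ᵥ (x - s)
  have hq : 0 ≤ q := by simpa only [star_trivial] using hL.dotProduct_mulVec_nonneg (x - s)
  refine hL.smul_add_smul_vecMulVec_mulVec (x - s) (by linarith) ?_
  have hsum : y ^ 2 + q ≠ 0 := by linarith
  have key : y ^ 2 - q + (2 - 4 * y ^ 2 / (y ^ 2 + q)) * q = (y ^ 2 - q) ^ 2 / (y ^ 2 + q) := by
    field_simp
    ring
  rw [key]
  positivity
end

section
/- Let G = (V, E) be a finite undirected graph with distinguished vertices s, t and nonnegative edge weights cost. Then the minimum s-t cut value, min over S ⊆ V with s ∈ S, t ∉ S of sum of cost over edges crossing (S, V\S), equals the minimum over all labelings x : V -> ℝ with x_s = 0, x_t = 1 of sum_{(u,v) ∈ E} cost_{uv} * |x_u - x_v|. -/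
/-!
Threshold rounding. For a labeling `x` with `x s = 0` and `x t = 1`, every strict sublevel set
`{v | x v < θ}` with `θ ∈ (0, 1]` is an `s`-`t` cut, and an edge `uv` is cut by it exactly when
`θ ∈ Ι (x u) (x v)`, a set of measure `|x u - x v|`. Integrating the cut weight over `θ ∈ (0, 1]`
therefore gives at most the fused-LASSO penalty of `x`, so some cut is no heavier than any
labeling; conversely the `0/1` labeling of a cut has penalty equal to its weight.
-/

open MeasureTheory Set Finset
open scoped Interval

theorem lt_ne_lt_iff_mem_uIoc {α : Type*} [LinearOrder α] {a b θ : α} :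
    (a < θ) ≠ (b < θ) ↔ θ ∈ Ι a b := by
  simp only [mem_uIoc, ← not_lt]
  tauto

theorem setIntegral_indicator_uIoc_le {a b c : ℝ} (hc : 0 ≤ c) {s : Set ℝ} :
    ∫ θ in s, (Ι a b).indicator (fun _ ↦ c) θ ≤ c * |a - b| := by
  rw [setIntegral_indicator measurableSet_uIoc, setIntegral_const, smul_eq_mul, mul_comm,
    abs_sub_comm]
  gcongr
  calc volume.real (s ∩ Ι a b) ≤ volume.real (Ι a b) :=
        measureReal_mono inter_subset_right (by simp [Real.volume_uIoc])
    _ = |b - a| := by rw [measureReal_def, Real.volume_uIoc, ENNReal.toReal_ofReal (abs_nonneg _)]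

theorem integrable_indicator_uIoc (a b c : ℝ) : Integrable ((Ι a b).indicator fun _ ↦ c) :=
  (integrableOn_const (by simp [Real.volume_uIoc])).integrable_indicator measurableSet_uIoc

section Cuts

variable {V : Type*} (E : Finset (V × V)) (cost : V × V → ℝ)

def fusedLassoPenalty (x : V → ℝ) : ℝ :=
  ∑ e ∈ E, cost e * |x e.1 - x e.2|

def cutWeight [DecidableEq V] (S : Finset V) : ℝ :=
  ∑ e ∈ E, if (e.1 ∈ S) ≠ (e.2 ∈ S) then cost e else 0

variable {E cost}

theorem fusedLassoPenalty_nonneg (hcost : ∀ e, 0 ≤ cost e) (x : V → ℝ) :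
    0 ≤ fusedLassoPenalty E cost x :=
  sum_nonneg fun e _ ↦ mul_nonneg (hcost e) (abs_nonneg _)

variable [DecidableEq V]

theorem cutWeight_nonneg (hcost : ∀ e, 0 ≤ cost e) (S : Finset V) : 0 ≤ cutWeight E cost S :=
  sum_nonneg fun e _ ↦ by split_ifs <;> simp [hcost e]

theorem fusedLassoPenalty_indicator (S : Finset V) :
    fusedLassoPenalty E cost (fun v ↦ if v ∈ S then 0 else 1) = cutWeight E cost S := by
  refine sum_congr rfl fun e _ ↦ ?_
  by_cases h₁ : e.1 ∈ S <;> by_cases h₂ : e.2 ∈ S <;> simp [h₁, h₂]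

variable [Fintype V]

theorem cutWeight_sublevel (x : V → ℝ) (θ : ℝ) :
    cutWeight E cost {v | x v < θ} =
      ∑ e ∈ E, (Ι (x e.1) (x e.2)).indicator (fun _ ↦ cost e) θ := by
  refine sum_congr rfl fun e _ ↦ ?_
  simp only [Finset.mem_filter, Finset.mem_univ, true_and]
  by_cases h : θ ∈ Ι (x e.1) (x e.2)
  · rw [if_pos (lt_ne_lt_iff_mem_uIoc.2 h), indicator_of_mem h]
  · rw [if_neg (mt lt_ne_lt_iff_mem_uIoc.1 h), indicator_of_notMem h]

theorem integrable_cutWeight_sublevel (x : V → ℝ) :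
    Integrable fun θ ↦ cutWeight E cost {v | x v < θ} := by
  rw [funext (cutWeight_sublevel x)]
  exact integrable_finsetSum _ fun e _ ↦ integrable_indicator_uIoc _ _ _

theorem setIntegral_cutWeight_sublevel_le (hcost : ∀ e, 0 ≤ cost e) (x : V → ℝ) {s : Set ℝ} :
    ∫ θ in s, cutWeight E cost {v | x v < θ} ≤ fusedLassoPenalty E cost x := by
  simp only [cutWeight_sublevel]
  rw [integral_finsetSum _ fun e _ ↦ (integrable_indicator_uIoc _ _ _).integrableOn]
  exact sum_le_sum fun e _ ↦ setIntegral_indicator_uIoc_le (hcost e)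

theorem le_fusedLassoPenalty_of_forall_le_cutWeight (hcost : ∀ e, 0 ≤ cost e) {s t : V} {m : ℝ}
    (hm : ∀ S : Finset V, s ∈ S → t ∉ S → m ≤ cutWeight E cost S)
    {x : V → ℝ} (hxs : x s = 0) (hxt : x t = 1) : m ≤ fusedLassoPenalty E cost x :=
  calc m = ∫ _ in Ioc (0 : ℝ) 1, m := by simp
    _ ≤ ∫ θ in Ioc (0 : ℝ) 1, cutWeight E cost {v | x v < θ} :=
      setIntegral_mono_on (integrableOn_const (by simp))
        (integrable_cutWeight_sublevel x).integrableOn measurableSet_Ioc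
        fun θ hθ ↦ hm _ (by simp [hxs, hθ.1]) (by simp [hxt, hθ.2])
    _ ≤ fusedLassoPenalty E cost x := setIntegral_cutWeight_sublevel_le hcost x

end Cuts

theorem stmt_13 (V : Type*) [Fintype V] [DecidableEq V]
    (E : Finset (V × V)) (cost : V × V → ℝ) (hcost : ∀ e, 0 ≤ cost e)
    (s t : V) (hst : s ≠ t) :
    sInf {c : ℝ | ∃ S : Finset V, s ∈ S ∧ t ∉ S ∧
        c = ∑ e ∈ E, if (e.1 ∈ S) ≠ (e.2 ∈ S) then cost e else 0} =
    sInf {c : ℝ | ∃ x : V → ℝ, x s = 0 ∧ x t = 1 ∧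
        c = ∑ e ∈ E, cost e * |x e.1 - x e.2|} := by
  set cuts := {c : ℝ | ∃ S : Finset V, s ∈ S ∧ t ∉ S ∧ c = cutWeight E cost S}
  set labelings := {c : ℝ | ∃ x : V → ℝ, x s = 0 ∧ x t = 1 ∧ c = fusedLassoPenalty E cost x}
  change sInf cuts = sInf labelings
  have hcuts : cuts.Nonempty := ⟨_, {s}, mem_singleton_self s, by simpa using hst.symm, rfl⟩
  have cuts_subset : cuts ⊆ labelings := by
    rintro _ ⟨S, hs, ht, rfl⟩
    exact ⟨_, by simp [hs], by simp [ht], (fusedLassoPenalty_indicator S).symm⟩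
  apply le_antisymm
  · refine le_csInf (hcuts.mono cuts_subset) ?_
    rintro _ ⟨x, hxs, hxt, rfl⟩
    refine le_fusedLassoPenalty_of_forall_le_cutWeight hcost (fun S hs ht ↦ ?_) hxs hxt
    exact csInf_le ⟨0, by rintro _ ⟨S, -, -, rfl⟩; exact cutWeight_nonneg hcost S⟩ ⟨S, hs, ht, rfl⟩
  · refine csInf_le_csInf ⟨0, ?_⟩ hcuts cuts_subset
    rintro _ ⟨x, -, -, rfl⟩
    exact fusedLassoPenalty_nonneg hcost x
end

section
/- Let a_1,...,a_k be nonnegative reals with sum_i a_i = OPT > 0, and let positive weights be updated as w_i^(t) = w_i^(t-1) + ((epsilon/rho) * (b_i / lambda) + (2 epsilon^2)/(k rho)) * mu^(t-1), where b_i >= 0, mu^(t-1) = sum_j w_j^(t-1), lambda > 0, epsilon ∈ (0, 1), rho > 0, and (epsilon/rho) * (b_i / lambda) * (mu^(t-1) / w_i^(t-1)) <= epsilon for all i. Then nu^(t) - nu^(t-1) >= (epsilon (1 - epsilon) mu^(t-1)) / (rho * OPT * lambda) * sum_i (a_i * b_i / w_i^(t-1)), where nu^(t) = (1/OPT) * sum_i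 a_i log(w_i^(t)). -/
/-!
Write the update as `w' i ≥ w i * (1 + v i)` with `v i = (ε/ρ) (b i/λ) (μ/w i)`, dropping the
nonnegative uniform term `2ε²μ/(kρ)`. The width condition gives `0 ≤ v i ≤ ε`, and on that range
`log (1 + v) ≥ v (1 - v) ≥ (1 - ε) v`. Averaging `log w' i - log w i ≥ (1 - ε) v i` against the
weights `a i / OPT` is the claimed bound.
-/

open Real Finset

lemma one_sub_mul_le_log_one_add {v ε : ℝ} (hv : 0 ≤ v) (hvε : v ≤ ε) :
    (1 - ε) * v ≤ log (1 + v) := by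
  have h1v : 0 < 1 + v := by linarith
  have hquad : (1 - ε) * v ≤ 1 - (1 + v)⁻¹ := by
    rw [show 1 - (1 + v)⁻¹ = v / (1 + v) by field_simp; ring, le_div_iff₀ h1v]
    nlinarith [mul_le_mul_of_nonneg_left hvε hv, mul_nonneg hv hv]
  exact hquad.trans (one_sub_inv_le_log_of_pos h1v)

lemma one_sub_mul_le_log_sub_log {w w' v ε : ℝ} (hw : 0 < w) (hv : 0 ≤ v) (hvε : v ≤ ε)
    (hw' : w * (1 + v) ≤ w') :
    (1 - ε) * v ≤ log w' - log w := by
  have h1v : 0 < 1 + v := by linarith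
  have hlog : log w + log (1 + v) ≤ log w' := by
    rw [← log_mul hw.ne' h1v.ne']
    exact log_le_log (mul_pos hw h1v) hw'
  linarith [one_sub_mul_le_log_one_add hv hvε]

theorem stmt_17_general (k : ℕ) (a b : Fin k → ℝ) (ha : ∀ i, 0 ≤ a i) (hb : ∀ i, 0 ≤ b i)
    (OPT : ℝ) (hOPTpos : 0 < OPT)
    (w w' : Fin k → ℝ) (hw : ∀ i, 0 < w i)
    (ε ρ lam μ : ℝ) (hε : 0 < ε) (hρ : 0 < ρ) (hlam : 0 < lam)
    (hμ : μ = ∑ j, w j)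
    (hup : ∀ i, w' i = w i + ((ε / ρ) * (b i / lam) + 2 * ε ^ 2 / (k * ρ)) * μ)
    (hwidth : ∀ i, (ε / ρ) * (b i / lam) * (μ / w i) ≤ ε) :
    (1 / OPT) * (∑ i, a i * Real.log (w' i)) - (1 / OPT) * (∑ i, a i * Real.log (w i)) ≥
      (ε * (1 - ε) * μ) / (ρ * OPT * lam) * ∑ i, a i * b i / w i := by
  have hμ0 : 0 ≤ μ := hμ ▸ sum_nonneg fun j _ => (hw j).le
  have hlog_gain : ∀ i, (1 - ε) * ((ε / ρ) * (b i / lam) * (μ / w i)) ≤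
      log (w' i) - log (w i) := by
    intro i
    refine one_sub_mul_le_log_sub_log (hw i) (by have := hb i; have := hw i; positivity) (hwidth i) ?_
    have hscaled : w i * ((ε / ρ) * (b i / lam) * (μ / w i)) = (ε / ρ) * (b i / lam) * μ := by
      field_simp [(hw i).ne']
    have hextra : 0 ≤ 2 * ε ^ 2 / (k * ρ) * μ := by positivity
    rw [hup i, mul_one_add, hscaled]
    linarith
  have hrhs : (ε * (1 - ε) * μ) / (ρ * OPT * lam) * ∑ i, a i * b i / w i =
      (1 / OPT) * ∑ i, a i * ((1 - ε) * ((ε / ρ) * (b i / lam) * (μ / w i))) := by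
    rw [mul_sum, mul_sum]
    refine sum_congr rfl fun i _ => ?_
    field_simp
  rw [← mul_sub, ← sum_sub_distrib, hrhs, ge_iff_le]
  gcongr with i
  rw [← mul_sub]
  exact mul_le_mul_of_nonneg_left (hlog_gain i) (ha i)

theorem stmt_17 (k : ℕ) (a b : Fin k → ℝ) (ha : ∀ i, 0 ≤ a i) (hb : ∀ i, 0 ≤ b i)
    (OPT : ℝ) (hOPT : OPT = ∑ i, a i) (hOPTpos : 0 < OPT)
    (w w' : Fin k → ℝ) (hw : ∀ i, 0 < w i)
    (ε ρ lam μ : ℝ) (hε : 0 < ε) (hε1 : ε < 1) (hρ : 0 < ρ) (hlam : 0 < lam)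
    (hμ : μ = ∑ j, w j)
    (hup : ∀ i, w' i = w i + ((ε / ρ) * (b i / lam) + 2 * ε ^ 2 / (k * ρ)) * μ)
    (hwidth : ∀ i, (ε / ρ) * (b i / lam) * (μ / w i) ≤ ε) :
    (1 / OPT) * (∑ i, a i * Real.log (w' i)) - (1 / OPT) * (∑ i, a i * Real.log (w i)) ≥
      (ε * (1 - ε) * μ) / (ρ * OPT * lam) * ∑ i, a i * b i / w i :=
  stmt_17_general k a b ha hb OPT hOPTpos w w' hw ε ρ lam μ hε hρ hlam hμ hup hwidth
end
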